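/- arXiv:2104.03994 — 8 statements merged into one kernel-verified Lean document; each statement's English description precedes it below -/
import Mathlib

section
/- An element a of a unital ring R has left unit stable range one if and only if for every x ∈ R there exists a unit u ∈ R such that (u + x) * a - 1 is a unit. -/
theorem stmt0 (R : Type*) [Ring R] (a : R) :
    (∀ x b : R, x * a + b = 1 → ∃ u : Rˣ, IsUnit (a + (u : R) * b)) ↔
    (∀ x : R, ∃ u : Rˣ, IsUnit (((u : R) + x) * a - 1)) := by
  constructor
  · intro h x
    obtain ⟨u, hu⟩ := h x (1 - x * a) (by abel)
    refine ⟨-u⁻¹, ?_⟩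
    rw [← IsUnit.neg_iff]
    have key : -((((-u⁻¹ : Rˣ) : R) + x) * a - 1)
        = ((u⁻¹ : Rˣ) : R) * (a + (u : R) * (1 - x * a)) := by
      have h1 : ((u⁻¹ : Rˣ) : R) * (u : R) = 1 := u.inv_mul
      simp only [Units.val_neg, mul_add, mul_sub, mul_one, ← mul_assoc, h1]
      noncomm_ring
    rw [key]
    exact (u⁻¹).isUnit.mul hu
  · intro h x b hb
    obtain ⟨u, hu⟩ := h x
    refine ⟨-u⁻¹, ?_⟩
    have hb' : b = 1 - x * a := eq_sub_of_add_eq' hb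
    have key : a + ((-u⁻¹ : Rˣ) : R) * b
        = ((u⁻¹ : Rˣ) : R) * (((u : R) + x) * a - 1) := by
      subst hb'
      have h1 : ((u⁻¹ : Rˣ) : R) * (u : R) = 1 := u.inv_mul
      simp only [Units.val_neg, mul_add, mul_sub, add_mul, mul_one, ← mul_assoc, h1]
      noncomm_ring
    rw [key]
    exact (u⁻¹).isUnit.mul hu
end

section
/- Unit stable range one is a left-right symmetric property: a ∈ R has left unit stable range one if and only if a has right unit stable range one. -/
private lemma jac {R : Type*} [Ring R] {a b : R} (h : IsUnit (1 - a * b)) :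
    IsUnit (1 - b * a) := by
  obtain ⟨u, hu⟩ := h
  have h1 : (1 - a * b) * ↑u⁻¹ = 1 := by rw [← hu]; exact u.mul_inv
  have h2 : (↑u⁻¹ : R) * (1 - a * b) = 1 := by rw [← hu]; exact u.inv_mul
  refine ⟨⟨1 - b * a, 1 + b * ↑u⁻¹ * a, ?_, ?_⟩, rfl⟩
  · calc (1 - b * a) * (1 + b * ↑u⁻¹ * a)
        = 1 - b * a + b * ((1 - a * b) * ↑u⁻¹) * a := by noncomm_ring
      _ = 1 := by rw [h1]; noncomm_ring
  · calc (1 + b * ↑u⁻¹ * a) * (1 - b * a)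
        = 1 - b * a + b * (↑u⁻¹ * (1 - a * b)) * a := by noncomm_ring
      _ = 1 := by rw [h2]; noncomm_ring

private lemma jac_iff {R : Type*} [Ring R] {a b : R} :
    IsUnit (a * b - 1) ↔ IsUnit (b * a - 1) := by
  rw [IsUnit.sub_iff, IsUnit.sub_iff (x := b * a)]
  exact ⟨jac, jac⟩

theorem stmt1 (R : Type*) [Ring R] (a : R) :
    (∀ x : R, ∃ u : Rˣ, IsUnit (((u : R) + x) * a - 1)) ↔
    (∀ x : R, ∃ u : Rˣ, IsUnit (a * ((u : R) + x) - 1)) := by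
  constructor <;> intro h x <;> obtain ⟨u, hu⟩ := h x <;> exact ⟨u, jac_iff.mp hu⟩
end

section
/- If a ∈ R satisfies the Goodearl–Menal condition, then a has unit stable range one. -/
theorem stmt2 (R : Type*) [Ring R] (a : R)
    (hGM : ∀ x : R, ∃ u : Rˣ, IsUnit (x - (u : R)) ∧ IsUnit (a - ((u⁻¹ : Rˣ) : R))) :
    ∀ x : R, ∃ u : Rˣ, IsUnit (((u : R) + x) * a - 1) := by
  intro x
  obtain ⟨u, h1, h2⟩ := hGM x
  obtain ⟨s, hs⟩ := h1
  refine ⟨-s, ?_⟩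
  have h3 : ((-s : Rˣ) : R) + x = (u : R) := by
    push_cast
    rw [hs, neg_sub, sub_add_cancel]
  rw [h3]
  have : (u : R) * a - 1 = (u : R) * (a - ((u⁻¹ : Rˣ) : R)) := by
    rw [mul_sub, Units.mul_inv]
  rw [this]
  exact u.isUnit.mul h2
end

section
/- If a ∈ R has unit stable range one, then there exists a unit u ∈ R such that a - u⁻¹ is a unit; in particular, a is a sum of two units. -/
theorem stmt3 (R : Type*) [Ring R] (a : R)
    (h : ∀ x : R, ∃ u : Rˣ, IsUnit (((u : R) + x) * a - 1)) :
    (∃ u : Rˣ, IsUnit (a - ((u⁻¹ : Rˣ) : R))) ∧ ∃ v w : Rˣ, a = (v : R) + (w : R) := by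
  obtain ⟨u, hu⟩ := h 0
  rw [add_zero] at hu
  have key : a - ((u⁻¹ : Rˣ) : R) = (u⁻¹ : Rˣ) * ((u : R) * a - 1) := by
    rw [mul_sub, ← mul_assoc, Units.inv_mul, one_mul, mul_one]
  have hunit : IsUnit (a - ((u⁻¹ : Rˣ) : R)) := by
    rw [key]; exact (Units.isUnit u⁻¹).mul hu
  refine ⟨⟨u, hunit⟩, u⁻¹, hunit.unit, ?_⟩
  rw [IsUnit.unit_spec]
  abel
end

section
/- Over any ring R and any r ∈ R, the 2×2 matrix r·E₁₂ (with r in position (1,2) and zeros elsewhere) has unit stable range one in M₂(R): for every X = ![![a,b],![c,d]], the unit U = ![![1,0],![-c,1]] satisfies that (U + X)·(r·E₁₂) - I₂ is a unit. -/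
theorem stmt10 (R : Type*) [Ring R] (r : R) (a b c d : R) :
    IsUnit (!![(1 : R), 0; -c, 1]) ∧
    IsUnit ((!![(1 : R), 0; -c, 1] + !![a, b; c, d]) * !![(0 : R), r; 0, 0] - 1) := by
  constructor
  · refine ⟨⟨_, !![(1 : R), 0; c, 1], ?_, ?_⟩, rfl⟩ <;>
    · ext i j
      fin_cases i <;> fin_cases j <;>
        simp [Matrix.mul_apply, Fin.sum_univ_two, Matrix.one_apply]
  · refine ⟨⟨_, !![(-1 : R), -((1 + a) * r); 0, -1], ?_, ?_⟩, rfl⟩ <;>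
    · ext i j
      fin_cases i <;> fin_cases j <;>
        simp [Matrix.mul_apply, Fin.sum_univ_two, Matrix.one_apply]
end

section
/- Over any ring R and any r ∈ R, the 2×2 matrix r·E₁₁ has unit stable range one in M₂(R): for every X = ![![a,b],![c,d]], the unit U = ![![-a,1],![-1,0]] satisfies that (U + X)·(r·E₁₁) - I₂ is invertible. -/
theorem stmt11 (R : Type*) [Ring R] (r : R) (a b c d : R) :
    IsUnit (!![-a, (1 : R); -1, 0]) ∧
    IsUnit ((!![-a, (1 : R); -1, 0] + !![a, b; c, d]) * !![r, (0 : R); 0, 0] - 1) := by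
  constructor
  · refine isUnit_iff_exists.mpr ⟨!![0, -1; 1, -a], ?_, ?_⟩ <;>
    · ext i j
      fin_cases i <;> fin_cases j <;>
        simp [Matrix.mul_apply, Fin.sum_univ_two, Matrix.one_apply]
  · refine isUnit_iff_exists.mpr ⟨!![-1, 0; -((c-1)*r), -1], ?_, ?_⟩ <;>
    · ext i j
      fin_cases i <;> fin_cases j <;>
        simp [Matrix.mul_apply, Fin.sum_univ_two, Matrix.one_apply] <;> noncomm_ring
end

section
/- For an integral 2×2 matrix A ∈ M₂(ℤ), A has unit stable range one if and only if det(A) ∈ {-1, 0, 1}. -/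
/-!
If `det A = ±1`, then `A` is a unit, and a unit has unit stable range one in any ring in which
every element is a sum of two units; `M₂(ℤ)` is such a ring because every integral matrix is
equivalent to some `diag(e, f) = [[e, 1], [-1, 0]] + [[0, -1], [1, f]]`. If `det A = 0`, then `A`
is equivalent to a diagonal matrix with a zero on the diagonal, for which `U` can be written down.

Conversely, put `d = det A` and `X = 3 adj A`, so that `(U + X) A - 1 = U A + (3d - 1) I`.
Its determinant `ε` is congruent to `δ d` modulo `3d - 1`, where `δ = det U`; as `ε` and `δ` are
units of `ℤ`, `3d - 1` then divides `3ε - δ`, which forces `|3d - 1| ≤ 4`, i.e. `d ∈ {-1, 0, 1}`.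
-/

open Matrix

def HasUnitStableRangeOne {R : Type*} [Ring R] (a : R) : Prop :=
  ∀ x : R, ∃ u : R, IsUnit u ∧ IsUnit ((u + x) * a - 1)

def IsTwoGood (R : Type*) [Ring R] : Prop :=
  ∀ a : R, ∃ u v : R, IsUnit u ∧ IsUnit v ∧ a = u + v

namespace HasUnitStableRangeOne

variable {R : Type*} [Ring R]

theorem units_mul_mul {a : R} (ha : HasUnitStableRangeOne a) (p q : Rˣ) :
    HasUnitStableRangeOne (p * a * q) := by
  intro x
  obtain ⟨u, hu, hua⟩ := ha (q * x * p)
  refine ⟨↑q⁻¹ * u * ↑p⁻¹, (q⁻¹.isUnit.mul hu).mul p⁻¹.isUnit, ?_⟩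
  have : (↑q⁻¹ * u * ↑p⁻¹ + x) * (p * a * q) - 1 = ↑q⁻¹ * ((u + q * x * p) * a - 1) * q := by
    simp only [add_mul, mul_add, mul_sub, sub_mul, mul_assoc, Units.inv_mul,
      Units.inv_mul_cancel_left, mul_one]
  rw [this]
  exact (q⁻¹.isUnit.mul hua).mul q.isUnit

theorem of_isUnit (hR : IsTwoGood R) {a : R} (ha : IsUnit a) : HasUnitStableRangeOne a := by
  obtain ⟨a, rfl⟩ := ha
  intro x
  obtain ⟨u, v, hu, hv, huv⟩ := hR (↑a⁻¹ - x)
  refine ⟨u, hu, ?_⟩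
  have : (u + x) * a - 1 = -v * a := by
    have hux : u + x = ↑a⁻¹ - v := by
      rw [eq_sub_iff_add_eq, add_right_comm, ← huv, sub_add_cancel]
    rw [hux, sub_mul, Units.inv_mul, sub_sub_cancel_left, neg_mul]
  rw [this]
  exact hv.neg.mul a.isUnit

end HasUnitStableRangeOne

theorem Matrix.isUnit_of_det_fin_two {R : Type*} [CommRing R] {a b c d : R}
    (h : IsUnit (a * d - b * c)) : IsUnit !![a, b; c, d] := by
  rwa [isUnit_iff_isUnit_det, det_fin_two_of]

theorem Int.exists_unimodular_bezout (x y : ℤ) :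
    ∃ p q r s : ℤ, p * s - q * r = 1 ∧ p * x + q * y = x.gcd y ∧ r * x + s * y = 0 := by
  rcases Nat.eq_zero_or_pos (x.gcd y) with hg | hg
  · obtain ⟨rfl, rfl⟩ := Int.gcd_eq_zero_iff.mp hg
    exact ⟨1, 0, 0, 1, by simp⟩
  obtain ⟨x', y', hcop, hx, hy⟩ := Int.exists_gcd_one hg
  obtain ⟨p, q, hpq⟩ := Int.isCoprime_iff_gcd_eq_one.mpr hcop
  exact ⟨p, q, -y', x', by linear_combination hpq,
    by linear_combination (x.gcd y : ℤ) * hpq + p * hx + q * hy,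
    by linear_combination x' * hy - y' * hx⟩

section EquivalentToDiagonal

variable {R : Type*} [CommRing R]

def IsEquivalentToDiagonal (A : Matrix (Fin 2) (Fin 2) R) : Prop :=
  ∃ (P Q : (Matrix (Fin 2) (Fin 2) R)ˣ) (e f : R),
    A = (P : Matrix (Fin 2) (Fin 2) R) * !![e, 0; 0, f] * Q

theorem isEquivalentToDiagonal_diagonal (e f : R) : IsEquivalentToDiagonal !![e, 0; 0, f] :=
  ⟨1, 1, e, f, by simp⟩

theorem IsEquivalentToDiagonal.of_mul_left {A P : Matrix (Fin 2) (Fin 2) R} (hP : IsUnit P)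
    (h : IsEquivalentToDiagonal (P * A)) : IsEquivalentToDiagonal A := by
  obtain ⟨P, rfl⟩ := hP
  obtain ⟨P', Q', e, f, hD⟩ := h
  refine ⟨P⁻¹ * P', Q', e, f, ?_⟩
  simp only [Units.val_mul, mul_assoc] at hD ⊢
  rw [← hD, Units.inv_mul_cancel_left]

theorem IsEquivalentToDiagonal.of_mul_right {A Q : Matrix (Fin 2) (Fin 2) R} (hQ : IsUnit Q)
    (h : IsEquivalentToDiagonal (A * Q)) : IsEquivalentToDiagonal A := by
  obtain ⟨Q, rfl⟩ := hQ
  obtain ⟨P', Q', e, f, hD⟩ := h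
  refine ⟨P', Q' * Q⁻¹, e, f, ?_⟩
  rw [Units.val_mul, ← mul_assoc, ← hD, Units.mul_inv_cancel_right]

end EquivalentToDiagonal

theorem isEquivalentToDiagonal_upper_triangular (a b d : ℤ) :
    IsEquivalentToDiagonal !![a, b; 0, d] := by
  induction h : a.natAbs using Nat.strong_induction_on generalizing a b d with
  | _ n ih =>
  have hswap : IsUnit !![(0 : ℤ), 1; 1, 0] := isUnit_of_det_fin_two (by norm_num)
  rcases eq_or_ne a 0 with rfl | ha
  · obtain ⟨p, q, r, s, hdet, hg, hz⟩ := Int.exists_unimodular_bezout b d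
    refine .of_mul_right hswap (.of_mul_left (isUnit_of_det_fin_two (hdet ▸ isUnit_one)) ?_)
    convert isEquivalentToDiagonal_diagonal (b.gcd d : ℤ) 0 using 1
    simp [hg, hz]
  -- Clear `b` modulo `a`; a nonzero remainder `t` is moved to the corner by a column swap and
  -- Bezout then makes the corner `gcd t d`, which is smaller than `a` in absolute value.
  set t := b % a with ht
  have hshear : IsUnit !![(1 : ℤ), -(b / a); 0, 1] := isUnit_of_det_fin_two (by norm_num)
  have hreduce : !![a, b; 0, d] * !![1, -(b / a); 0, 1] = !![a, t; 0, d] := by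
    simp [ht, Int.emod_def, neg_add_eq_sub]
  refine .of_mul_right hshear ?_
  rw [hreduce]
  rcases eq_or_ne t 0 with ht0 | ht0
  · rw [ht0]; exact isEquivalentToDiagonal_diagonal a d
  obtain ⟨p, q, r, s, hdet, hg, hz⟩ := Int.exists_unimodular_bezout t d
  refine .of_mul_right hswap (.of_mul_left (isUnit_of_det_fin_two (hdet ▸ isUnit_one)) ?_)
  have hlt : (t.gcd d : ℤ).natAbs < n := by
    have := Int.emod_lt b ha
    have := Int.emod_nonneg b ha
    have := Int.natAbs_le_of_dvd_ne_zero (Int.gcd_dvd_left t d) ht0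
    omega
  convert ih _ hlt (t.gcd d) (p * a) (r * a) rfl using 1
  simp [hg, hz]

theorem isEquivalentToDiagonal_int (A : Matrix (Fin 2) (Fin 2) ℤ) : IsEquivalentToDiagonal A := by
  obtain ⟨p, q, r, s, hdet, hg, hz⟩ := Int.exists_unimodular_bezout (A 0 0) (A 1 0)
  refine .of_mul_left (isUnit_of_det_fin_two (hdet ▸ isUnit_one)) ?_
  convert isEquivalentToDiagonal_upper_triangular ((A 0 0).gcd (A 1 0))
    (p * A 0 1 + q * A 1 1) (r * A 0 1 + s * A 1 1) using 1
  rw [eta_fin_two A]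
  simp [hg, hz]

theorem isTwoGood_matrix_int : IsTwoGood (Matrix (Fin 2) (Fin 2) ℤ) := by
  intro W
  obtain ⟨P, Q, e, f, rfl⟩ := isEquivalentToDiagonal_int W
  have hsplit : !![e, 0; 0, f] = !![e, 1; -1, 0] + !![0, -1; 1, f] := by
    simp
  refine ⟨P * !![e, 1; -1, 0] * Q, P * !![0, -1; 1, f] * Q,
    (P.isUnit.mul (isUnit_of_det_fin_two (by simp))).mul Q.isUnit,
    (P.isUnit.mul (isUnit_of_det_fin_two (by simp))).mul Q.isUnit, ?_⟩
  rw [hsplit, mul_add, add_mul]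

theorem hasUnitStableRangeOne_diagonal_of_eq_zero {R : Type*} [CommRing R] {e f : R}
    (h : e = 0 ∨ f = 0) : HasUnitStableRangeOne !![e, 0; 0, f] := by
  intro X
  -- `U` cancels the entries of `X` that would meet the nonzero diagonal entry, so that
  -- `(U + X) * diag - 1` is triangular with `-1` on the diagonal.
  rcases h with rfl | rfl
  · refine ⟨!![0, -1; 1, -X 1 1], isUnit_of_det_fin_two (by simp), ?_⟩
    have hV : (!![0, -1; 1, -X 1 1] + X) * !![0, 0; 0, f] - 1 =
        !![-1, (X 0 1 - 1) * f; 0, -1] := by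
      ext i j; fin_cases i <;> fin_cases j <;> simp [mul_apply, one_apply, neg_add_eq_sub]
    rw [hV]
    exact isUnit_of_det_fin_two (by simp)
  · refine ⟨!![-X 0 0, 1; -1, 0], isUnit_of_det_fin_two (by simp), ?_⟩
    have hV : (!![-X 0 0, 1; -1, 0] + X) * !![e, 0; 0, 0] - 1 =
        !![-1, 0; (X 1 0 - 1) * e, -1] := by
      ext i j; fin_cases i <;> fin_cases j <;> simp [mul_apply, one_apply, neg_add_eq_sub]
    rw [hV]
    exact isUnit_of_det_fin_two (by simp)

theorem hasUnitStableRangeOne_of_det_eq_zero {A : Matrix (Fin 2) (Fin 2) ℤ} (hA : A.det = 0) :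
    HasUnitStableRangeOne A := by
  obtain ⟨P, Q, e, f, rfl⟩ := isEquivalentToDiagonal_int A
  refine (hasUnitStableRangeOne_diagonal_of_eq_zero ?_).units_mul_mul P Q
  rw [det_mul, det_mul, det_fin_two_of, mul_zero, sub_zero] at hA
  simpa [(isUnits_det_units P).ne_zero, (isUnits_det_units Q).ne_zero] using hA

theorem Matrix.det_add_smul_one_fin_two {R : Type*} [CommRing R] (W : Matrix (Fin 2) (Fin 2) R)
    (c : R) : (W + c • 1).det = W.det + c * (W.trace + c) := by
  simp only [det_fin_two, trace_fin_two, add_apply, smul_apply, smul_eq_mul, one_apply_eq,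
    one_apply_ne zero_ne_one, one_apply_ne one_ne_zero]
  ring

theorem Int.mem_of_three_mul_sub_one_dvd {d ε δ : ℤ} (hε : IsUnit ε) (hδ : IsUnit δ)
    (h : 3 * d - 1 ∣ ε - δ * d) : d ∈ ({-1, 0, 1} : Set ℤ) := by
  have h3 : 3 * d - 1 ∣ 3 * ε - δ := by
    have : 3 * ε - δ = 3 * (ε - δ * d) + δ * (3 * d - 1) := by ring
    rw [this]
    exact (h.mul_left 3).add (dvd_mul_left _ _)
  rcases Int.isUnit_iff.mp hε with rfl | rfl <;> rcases Int.isUnit_iff.mp hδ with rfl | rfl <;>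
  · have := Int.natAbs_le_of_dvd_ne_zero h3 (by norm_num)
    simp only [Set.mem_insert_iff, Set.mem_singleton_iff]
    omega

theorem det_mem_of_hasUnitStableRangeOne {A : Matrix (Fin 2) (Fin 2) ℤ}
    (h : HasUnitStableRangeOne A) : A.det ∈ ({-1, 0, 1} : Set ℤ) := by
  obtain ⟨U, hU, hV⟩ := h ((3 : ℤ) • A.adjugate)
  have hV' : (U + (3 : ℤ) • A.adjugate) * A - 1 = U * A + (3 * A.det - 1) • 1 := by
    rw [add_mul, smul_mul, adjugate_mul, smul_smul, sub_smul, one_smul, add_sub_assoc]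
  rw [isUnit_iff_isUnit_det, hV', det_add_smul_one_fin_two, det_mul] at hV
  rw [isUnit_iff_isUnit_det] at hU
  exact Int.mem_of_three_mul_sub_one_dvd hV hU ⟨(U * A).trace + (3 * A.det - 1), by ring⟩

theorem stmt16 (A : Matrix (Fin 2) (Fin 2) ℤ) :
    (∀ X : Matrix (Fin 2) (Fin 2) ℤ, ∃ U : Matrix (Fin 2) (Fin 2) ℤ,
      IsUnit U ∧ IsUnit ((U + X) * A - 1)) ↔ A.det ∈ ({-1, 0, 1} : Set ℤ) := by
  change HasUnitStableRangeOne A ↔ _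
  refine ⟨det_mem_of_hasUnitStableRangeOne, fun hdet => ?_⟩
  obtain h0 | hunit : A.det = 0 ∨ IsUnit A.det := by
    simp only [Set.mem_insert_iff, Set.mem_singleton_iff] at hdet
    rw [Int.isUnit_iff]
    tauto
  · exact hasUnitStableRangeOne_of_det_eq_zero h0
  · exact .of_isUnit isTwoGood_matrix_int ((isUnit_iff_isUnit_det A).mpr hunit)
end

section
/- No nonzero matrix of M₂(ℤ) satisfies the Goodearl–Menal condition; equivalently, if A ∈ M₂(ℤ) satisfies the GM condition then A = 0. -/
/-!
The Goodearl–Menal condition is invariant under `A ↦ P * A * Q` for invertible `P`, `Q`, and for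
integer matrices it says that for each `X` some `U` with `det U = ±1` makes `det (X - U)` and
`det (A * U - 1)` equal to `±1`. For `2 × 2` matrices both determinants are affine in `tr (A * U)`;
testing `X = 5 • adj A` and eliminating that trace forces `det A = 0`. A singular `2 × 2` integer
matrix is equivalent to `!![k, 0; 0, 0]`, and testing `X = !![0, 5; 5, 1]` forces `k = 0` by a
parity argument and a congruence modulo `5`.
-/

open Matrix

def IsGoodearlMenal {R : Type*} [Ring R] (a : R) : Prop :=
  ∀ x : R, ∃ u : Rˣ, IsUnit (x - u) ∧ IsUnit (a - ↑u⁻¹)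

namespace IsGoodearlMenal

variable {R : Type*} [Ring R] {a : R}

theorem mul_mul_of_isUnit (ha : IsGoodearlMenal a) {p q : R} (hp : IsUnit p) (hq : IsUnit q) :
    IsGoodearlMenal (p * a * q) := by
  obtain ⟨p, rfl⟩ := hp
  obtain ⟨q, rfl⟩ := hq
  intro x
  obtain ⟨u, hxu, hau⟩ := ha (q * x * p)
  refine ⟨q⁻¹ * u * p⁻¹, ?_, ?_⟩
  · have : x - ↑(q⁻¹ * u * p⁻¹) = ↑q⁻¹ * (↑q * x * ↑p - ↑u) * ↑p⁻¹ := by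
      simp [mul_sub, sub_mul, mul_assoc]
    rw [this]
    exact (q⁻¹.isUnit.mul hxu).mul p⁻¹.isUnit
  · have : ↑p * a * ↑q - ↑(q⁻¹ * u * p⁻¹)⁻¹ = ↑p * (a - ↑u⁻¹) * ↑q := by
      simp [mul_sub, sub_mul, mul_assoc]
    rw [this]
    exact (p.isUnit.mul hau).mul q.isUnit

theorem exists_isUnit_mul_sub_one (ha : IsGoodearlMenal a) (x : R) :
    ∃ u : Rˣ, IsUnit (x - u) ∧ IsUnit (a * u - 1) := by
  obtain ⟨u, hxu, hau⟩ := ha x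
  refine ⟨u, hxu, ?_⟩
  rw [show a * u - 1 = (a - ↑u⁻¹) * u by simp [sub_mul]]
  exact hau.mul u.isUnit

theorem exists_isUnit_det {n K : Type*} [Fintype n] [DecidableEq n] [CommRing K]
    {A : Matrix n n K} (hA : IsGoodearlMenal A) (X : Matrix n n K) :
    ∃ U : Matrix n n K, IsUnit U.det ∧ IsUnit (X - U).det ∧ IsUnit (A * U - 1).det := by
  obtain ⟨U, hXU, hAU⟩ := hA.exists_isUnit_mul_sub_one X
  exact ⟨U, (isUnit_iff_isUnit_det _).mp U.isUnit, (isUnit_iff_isUnit_det _).mp hXU,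
    (isUnit_iff_isUnit_det _).mp hAU⟩

end IsGoodearlMenal

namespace Matrix

section CommRing

variable {K : Type*} [CommRing K]

theorem det_sub_fin_two (X Y : Matrix (Fin 2) (Fin 2) K) :
    (X - Y).det = X.det - (X.adjugate * Y).trace + Y.det := by
  rw [adjugate_fin_two, trace_fin_two, det_fin_two, det_fin_two, det_fin_two]
  simp only [mul_apply, Fin.sum_univ_two, Matrix.sub_apply, of_apply, cons_val_zero, cons_val_one,
    cons_val_fin_one]
  ring

theorem det_sub_one_fin_two (M : Matrix (Fin 2) (Fin 2) K) :
    (M - 1).det = M.det - M.trace + 1 := by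
  simp only [det_fin_two, trace_fin_two, sub_apply, one_apply_eq, one_apply_ne, ne_eq,
    zero_ne_one, one_ne_zero, not_false_eq_true, sub_zero]
  ring

end CommRing

section EuclideanDomain

variable {R : Type*} [EuclideanDomain R] [GCDMonoid R]

theorem exists_isCoprime_vecMul_eq_zero {m : Type*} {A : Matrix (Fin 2) m R} {w : Fin 2 → R}
    (hw : w ≠ 0) (hwA : w ᵥ* A = 0) : ∃ v : Fin 2 → R, IsCoprime (v 0) (v 1) ∧ v ᵥ* A = 0 := by
  set g := gcd (w 0) (w 1)
  have hg : g ≠ 0 := by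
    intro hg
    obtain ⟨h0, h1⟩ := (gcd_eq_zero_iff _ _).mp hg
    exact hw (by ext i; fin_cases i <;> assumption)
  have hgw : g • (fun i => w i / g) = w := by
    ext i
    fin_cases i
    · exact EuclideanDomain.mul_div_cancel' hg (gcd_dvd_left _ _)
    · exact EuclideanDomain.mul_div_cancel' hg (gcd_dvd_right _ _)
  refine ⟨fun i => w i / g, isCoprime_div_gcd_div_gcd_of_gcd_ne_zero hg, ?_⟩
  have : g • ((fun i => w i / g) ᵥ* A) = 0 := by rw [← smul_vecMul, hgw, hwA]
  exact (smul_eq_zero.mp this).resolve_left hg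

theorem exists_isUnit_mul_row_one_eq_zero {A : Matrix (Fin 2) (Fin 2) R} (hA : A.det = 0) :
    ∃ P : Matrix (Fin 2) (Fin 2) R, IsUnit P ∧ (P * A) 1 = 0 := by
  by_cases h0 : A = 0
  · exact ⟨1, isUnit_one, by rw [h0, Matrix.mul_zero]; rfl⟩
  have hadj : A.adjugate ≠ 0 := fun h => h0 (by simpa [h] using (adjugate_adjugate' A).symm)
  obtain ⟨i, hi⟩ := Function.ne_iff.mp hadj
  -- the rows of `adj A` lie in the left kernel of `A`, since `adj A * A = det A • 1 = 0`
  obtain ⟨v, hv, hvA⟩ := exists_isCoprime_vecMul_eq_zero (A := A) hi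
    (by rw [← mul_apply_eq_vecMul, adjugate_mul, hA, zero_smul]; rfl)
  obtain ⟨P, -, rfl⟩ := ModularGroup.bottom_row_surj (R := R) hv
  exact ⟨P, (isUnit_iff_isUnit_det _).mpr (by simp), hvA⟩

theorem exists_isUnit_mul_mul_eq_of_det_eq_zero {A : Matrix (Fin 2) (Fin 2) R}
    (hA : A.det = 0) :
    ∃ P Q : Matrix (Fin 2) (Fin 2) R, IsUnit P ∧ IsUnit Q ∧ ∃ k, P * A * Q = !![k, 0; 0, 0] := by
  obtain ⟨P, hP, hPA⟩ := exists_isUnit_mul_row_one_eq_zero hA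
  obtain ⟨Q, hQ, hQA⟩ := exists_isUnit_mul_row_one_eq_zero (A := Aᵀ) (by rwa [det_transpose])
  refine ⟨P, Qᵀ, hP, (isUnit_transpose Q).mpr hQ, (P * A * Qᵀ) 0 0, ?_⟩
  have hrow : (P * A * Qᵀ) 1 = 0 := by rw [mul_apply_eq_vecMul, hPA, zero_vecMul]
  have hcol : (P * A * Qᵀ)ᵀ 1 = 0 := by
    rw [transpose_mul, transpose_mul, transpose_transpose, ← Matrix.mul_assoc,
      mul_apply_eq_vecMul, hQA, zero_vecMul]
  ext i j
  fin_cases i <;> fin_cases j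
  · rfl
  · exact congrFun hcol 0
  · exact congrFun hrow 0
  · exact congrFun hrow 1

end EuclideanDomain

end Matrix

namespace IsGoodearlMenal

theorem det_eq_zero {A : Matrix (Fin 2) (Fin 2) ℤ} (hA : IsGoodearlMenal A) : A.det = 0 := by
  obtain ⟨U, hU, hXU, hAU⟩ := hA.exists_isUnit_det ((5 : ℤ) • A.adjugate)
  rw [det_sub_fin_two, det_smul, det_adjugate, adjugate_smul, adjugate_adjugate', smul_mul_assoc,
    trace_smul] at hXU
  rw [det_sub_one_fin_two, det_mul] at hAU
  simp only [Int.isUnit_iff, Fintype.card_fin, Nat.add_one_sub_one, pow_one, tsub_self, pow_zero,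
    one_smul, smul_eq_mul] at hU hXU hAU
  generalize A.det = D, U.det = ε, (A * U).trace = t at *
  -- eliminating `t` leaves `(25 - 5 ε) D ∈ {η - 5 θ - ε + 5 | η, θ = ±1}`, too small to be nonzero
  rcases hU with rfl | rfl <;> omega

theorem eq_zero_of_fin_two_diag {k : ℤ} (h : IsGoodearlMenal !![k, 0; 0, 0]) : k = 0 := by
  by_contra hk
  obtain ⟨U, hU, hXU, hAU⟩ := h.exists_isUnit_det !![0, 5; 5, 1]
  obtain ⟨a, b, c, d, rfl⟩ : ∃ a b c d, U = !![a, b; c, d] := ⟨_, _, _, _, eta_fin_two U⟩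
  have hXU_det : (!![0, 5; 5, 1] - !![a, b; c, d]).det = a * d - b * c - a - 25 + 5 * (b + c) := by
    rw [det_fin_two]
    simp only [Matrix.sub_apply, of_apply, cons_val_zero, cons_val_one, cons_val_fin_one]
    ring
  have hAU_det : (!![k, 0; 0, 0] * !![a, b; c, d] - 1).det = 1 - k * a := by
    simp [det_fin_two]
  rw [det_fin_two_of] at hU
  rw [hXU_det] at hXU
  rw [hAU_det] at hAU
  obtain ⟨ε, hε, hU⟩ : ∃ ε : ℤ, (ε = 1 ∨ ε = -1) ∧ a * d - b * c = ε :=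
    ⟨_, Int.isUnit_iff.mp hU, rfl⟩
  rw [hU] at hXU
  replace hXU := Int.isUnit_iff.mp hXU
  replace hAU := Int.isUnit_iff.mp hAU
  rcases Int.even_or_odd a with ha | ha
  · have hbc : Odd (b * c) := by
      rw [show b * c = a * d - ε by linarith]
      exact (ha.mul_right d).sub_odd (by rcases hε with rfl | rfl <;> decide)
    obtain ⟨⟨u, rfl⟩, ⟨v, rfl⟩⟩ := Int.odd_mul.mp hbc
    obtain ⟨m, rfl⟩ := ha
    omega
  · have hka : k * a = 2 := by
      rcases hAU with h | h
      · rcases mul_eq_zero.mp (by linarith : k * a = 0) with hk0 | rfl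
        · exact absurd hk0 hk
        · exact absurd ha (by decide)
      · linarith
    have : a.natAbs ≤ 2 := Nat.le_of_dvd two_pos (Int.natAbs_dvd_natAbs.mpr (Dvd.intro_left k hka))
    obtain ⟨m, rfl⟩ := ha
    omega

end IsGoodearlMenal

theorem stmt19 (A : Matrix (Fin 2) (Fin 2) ℤ)
    (hGM : ∀ X : Matrix (Fin 2) (Fin 2) ℤ, ∃ U : (Matrix (Fin 2) (Fin 2) ℤ)ˣ,
      IsUnit (X - (U : Matrix (Fin 2) (Fin 2) ℤ)) ∧
      IsUnit (A - ((U⁻¹ : (Matrix (Fin 2) (Fin 2) ℤ)ˣ) : Matrix (Fin 2) (Fin 2) ℤ))) :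
    A = 0 := by
  have hA : IsGoodearlMenal A := hGM
  obtain ⟨P, Q, hP, hQ, k, hPAQ⟩ := exists_isUnit_mul_mul_eq_of_det_eq_zero hA.det_eq_zero
  have hk : k = 0 := IsGoodearlMenal.eq_zero_of_fin_two_diag (hPAQ ▸ hA.mul_mul_of_isUnit hP hQ)
  have hPAQ0 : P * A * Q = 0 := by
    rw [hPAQ, hk]
    exact (eta_fin_two 0).symm
  rwa [hQ.mul_left_eq_zero, hP.mul_right_eq_zero] at hPAQ0
end
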